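/- Let k be an even positive integer and define, for each t ∈ [−π, π], the points G_t = (−(π/2)cos t, −(π/2)sin t, cos(kt), sin(kt)), H_t = ((π/2)cos t, (π/2)sin t, cos(kt), sin(kt)), and O_t = (0, 0, cos(kt), sin(kt)) in ℝ⁴. Then M_k = ⋃_{t ∈ [−π,π]} (segment[G_t, O_t] ∪ segment[O_t, H_t]), where M_k = {(r cos t, r sin t, cos(kt), sin(kt)) : 0 ≤ r ≤ π/2, 0 ≤ t ≤ 2π}; in particular M_k is a ruled surface. -/

import Mathlib

/-!
In the coordinates `(r, t) ↦ (r cos t, r sin t, cos kt, sin kt)` each segment `[G_t, O_t]`,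
`[O_t, H_t]` is a radial segment `t = const`, and together they form the diameter
`r ∈ [-π/2, π/2]` at angle `t`. Since `k` is even, the point with coordinates `(-r, t)` is the
point with coordinates `(r, t + π)`, and since the map is `2π`-periodic in `t`, the parameter
domains `[0, π/2] × [0, 2π]` and `[-π/2, π/2] × [-π, π]` have the same image.
-/

open Real Set

noncomputable section

def polarPoint (k : ℤ) (r t : ℝ) : ℝ × ℝ × ℝ × ℝ :=
  (r * cos t, r * sin t, cos (k * t), sin (k * t))

lemma polarPoint_periodic (k : ℤ) (r : ℝ) : Function.Periodic (polarPoint k r) (2 * π) := by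
  intro t
  have hkt : (k : ℝ) * (t + 2 * π) = k * t + k * (2 * π) := by ring
  simp only [polarPoint, cos_add_two_pi, sin_add_two_pi, hkt, cos_add_int_mul_two_pi,
    sin_add_int_mul_two_pi]

lemma polarPoint_add_pi {k : ℤ} (hk : Even k) (r t : ℝ) :
    polarPoint k r (t + π) = polarPoint k (-r) t := by
  obtain ⟨m, rfl⟩ := hk
  have hkt : ((m + m : ℤ) : ℝ) * (t + π) = (m + m : ℤ) * t + m * (2 * π) := by push_cast; ring
  simp only [polarPoint, cos_add_pi, sin_add_pi, hkt, cos_add_int_mul_two_pi,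
    sin_add_int_mul_two_pi, neg_mul, mul_neg]

lemma exists_polarPoint_abs_eq {k : ℤ} (hk : Even k) (r t : ℝ) :
    ∃ s, polarPoint k r t = polarPoint k |r| s := by
  rcases le_or_gt 0 r with hr | hr
  · exact ⟨t, by rw [abs_of_nonneg hr]⟩
  · exact ⟨t + π, by rw [abs_of_neg hr, polarPoint_add_pi hk, neg_neg]⟩

lemma segment_polarPoint (k : ℤ) (t : ℝ) {a b : ℝ} (hab : a ≤ b) :
    segment ℝ (polarPoint k a t) (polarPoint k b t) = (polarPoint k · t) '' Icc a b := by
  have hline : (polarPoint k · t) = AffineMap.lineMap (polarPoint k 0 t) (polarPoint k 1 t) := by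
    funext r
    simp [AffineMap.lineMap_apply, polarPoint]
  rw [← segment_eq_Icc hab, hline, image_segment, ← congr_fun hline a, ← congr_fun hline b]

end

theorem Mk_is_ruled_general (k : ℤ) (hke : Even k)
    (G H O : ℝ → ℝ × ℝ × ℝ × ℝ)
    (hG : ∀ t, G t = (-(Real.pi / 2) * Real.cos t, -(Real.pi / 2) * Real.sin t,
      Real.cos (k * t), Real.sin (k * t)))
    (hH : ∀ t, H t = ((Real.pi / 2) * Real.cos t, (Real.pi / 2) * Real.sin t,
      Real.cos (k * t), Real.sin (k * t)))
    (hO : ∀ t, O t = (0, 0, Real.cos (k * t), Real.sin (k * t)))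
    (Mk : Set (ℝ × ℝ × ℝ × ℝ))
    (hMk : Mk = {x | ∃ r t : ℝ, 0 ≤ r ∧ r ≤ Real.pi / 2 ∧ 0 ≤ t ∧ t ≤ 2 * Real.pi ∧
      x = (r * Real.cos t, r * Real.sin t, Real.cos (k * t), Real.sin (k * t))}) :
    Mk = ⋃ t ∈ Set.Icc (-Real.pi) Real.pi,
      (segment ℝ (G t) (O t) ∪ segment ℝ (O t) (H t)) := by
  have hdiameter : ∀ t, segment ℝ (G t) (O t) ∪ segment ℝ (O t) (H t) =
      (polarPoint k · t) '' Icc (-(π / 2)) (π / 2) := by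
    intro t
    have hπ : 0 ≤ π / 2 := by positivity
    rw [show G t = polarPoint k (-(π / 2)) t from hG t, show H t = polarPoint k (π / 2) t from hH t,
      show O t = polarPoint k 0 t by simp [hO, polarPoint], segment_polarPoint k t (by linarith),
      segment_polarPoint k t hπ, ← image_union, Icc_union_Icc_eq_Icc (by linarith) hπ]
  simp only [hdiameter, hMk]
  ext x
  simp only [mem_iUnion, mem_image, mem_ofPred_eq, mem_Icc, exists_prop]
  constructor
  · rintro ⟨r, t, hr0, hr, -, -, rfl⟩
    obtain ⟨s, hs, hts⟩ := (polarPoint_periodic k r).exists_mem_Ioc two_pi_pos t (-π)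
    exact ⟨s, ⟨hs.1.le, by linarith [hs.2]⟩, r, ⟨by linarith, hr⟩, hts.symm⟩
  · rintro ⟨t, -, r, hr, rfl⟩
    obtain ⟨s, hs⟩ := exists_polarPoint_abs_eq hke r t
    obtain ⟨u, hu, hsu⟩ := (polarPoint_periodic k |r|).exists_mem_Ico₀ two_pi_pos s
    exact ⟨|r|, u, abs_nonneg r, abs_le.2 hr, hu.1, hu.2.le, hs.trans hsu⟩

theorem Mk_is_ruled (k : ℤ) (hk : 0 < k) (hke : Even k)
    (G H O : ℝ → ℝ × ℝ × ℝ × ℝ)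
    (hG : ∀ t, G t = (-(Real.pi / 2) * Real.cos t, -(Real.pi / 2) * Real.sin t,
      Real.cos (k * t), Real.sin (k * t)))
    (hH : ∀ t, H t = ((Real.pi / 2) * Real.cos t, (Real.pi / 2) * Real.sin t,
      Real.cos (k * t), Real.sin (k * t)))
    (hO : ∀ t, O t = (0, 0, Real.cos (k * t), Real.sin (k * t)))
    (Mk : Set (ℝ × ℝ × ℝ × ℝ))
    (hMk : Mk = {x | ∃ r t : ℝ, 0 ≤ r ∧ r ≤ Real.pi / 2 ∧ 0 ≤ t ∧ t ≤ 2 * Real.pi ∧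
      x = (r * Real.cos t, r * Real.sin t, Real.cos (k * t), Real.sin (k * t))}) :
    Mk = ⋃ t ∈ Set.Icc (-Real.pi) Real.pi,
      (segment ℝ (G t) (O t) ∪ segment ℝ (O t) (H t)) :=
  Mk_is_ruled_general k hke G H O hG hH hO Mk hMk
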